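/- arXiv:2506.03983 — 6 statements merged into one kernel-verified Lean document; each statement's English description precedes it below -/
import Mathlib

section
/- Let A be a set of nonnegative integers with 0 ∈ A and |A| ≥ 2, and let α = (α_1,...,α_s), β = (β_1,...,β_t) be nondecreasing vectors of positive integers. If R_{A,α}(n) = R_{A,β}(n) for every nonnegative integer n, then s = t and α_i = β_i for all i. -/
/-!
The generating function of `R_{A,α}` is `∏ᵢ F_A(X^{αᵢ})` with `F_A = ∑_{a ∈ A} X^a`, so the
hypothesis says that the multisets `α` and `β` give the same product of power series. Every factor
has constant term `1`, hence is a unit, and the multiplicity of each `μ` can be read off in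
increasing order of `μ`: once the factors `F_A(X^k)` with `k < μ` are known to agree they cancel,
and if `m` is the least nonzero element of `A`, the coefficient of `X^(μ m)` in the product of the
remaining factors (all with `k ≥ μ`) is the number of factors with `k = μ`. Finally two sorted lists
with the same multiset of entries are equal.
-/

/-- Representation function for a set `A ⊆ ℕ` and coefficient vector `a`:
the number of tuples `(v i)` of elements of `A` with `∑ a i * v i = n`. -/
noncomputable def RSet (A : Set ℕ) {ι : Type} [Fintype ι] (a : ι → ℕ) (n : ℕ) : ℕ :=
  Nat.card {v : ι → ℕ // (∀ i, v i ∈ A) ∧ ∑ i, a i * v i = n}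

open PowerSeries

open Classical in
/-- `∑_{a ∈ A} X^(k a)`, that is `F_A(X^k)` for the generating function `F_A` of `A`. -/
noncomputable def dilateGenFun (A : Set ℕ) (k : ℕ) : ℤ⟦X⟧ :=
  PowerSeries.mk fun n => if ∃ a ∈ A, k * a = n then 1 else 0

theorem coeff_mul_of_coeff_eq_zero {R : Type*} [CommSemiring R] {f g : R⟦X⟧} {n : ℕ} (hn : 0 < n)
    (hf : ∀ i, 0 < i → i < n → coeff i f = 0) :
    coeff n (f * g) = constantCoeff f * coeff n g + coeff n f * constantCoeff g := by
  rw [coeff_mul, Finset.sum_eq_add_of_mem (0, n) (n, 0) (by simp) (by simp) (by simp [hn.ne'])]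
  · simp
  · rintro ⟨i, j⟩ hij hne
    have hij : i + j = n := Finset.HasAntidiagonal.mem_antidiagonal.mp hij
    rw [hf i (by grind) (by grind), zero_mul]

section dilateGenFun

variable {A : Set ℕ}

theorem constantCoeff_dilateGenFun (h0A : 0 ∈ A) (k : ℕ) :
    constantCoeff (dilateGenFun A k) = 1 := by
  rw [← coeff_zero_eq_constantCoeff_apply, dilateGenFun, coeff_mk, if_pos ⟨0, h0A, mul_zero k⟩]

theorem coeff_dilateGenFun_mul_of_mem {a : ℕ} (ha : a ∈ A) (k : ℕ) :
    coeff (k * a) (dilateGenFun A k) = 1 := by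
  rw [dilateGenFun, coeff_mk, if_pos ⟨a, ha, rfl⟩]

theorem coeff_dilateGenFun_eq_zero {m : ℕ} (hmin : ∀ a ∈ A, 0 < a → m ≤ a) {k n : ℕ}
    (hn0 : 0 < n) (hn : n < k * m) : coeff n (dilateGenFun A k) = 0 := by
  rw [dilateGenFun, coeff_mk, if_neg]
  rintro ⟨a, ha, rfl⟩
  exact hn.not_ge (Nat.mul_le_mul_left k (hmin a ha (Nat.pos_of_mul_pos_left hn0)))

theorem constantCoeff_prod_map_dilateGenFun (h0A : 0 ∈ A) (M : Multiset ℕ) :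
    constantCoeff (M.map (dilateGenFun A)).prod = 1 := by
  simp [map_multiset_prod, Multiset.map_map, constantCoeff_dilateGenFun h0A]

theorem coeff_prod_map_dilateGenFun_of_le (h0A : 0 ∈ A) {m : ℕ} (hmA : m ∈ A) (hm0 : 0 < m)
    (hmin : ∀ a ∈ A, 0 < a → m ≤ a) {μ : ℕ} (hμ : 0 < μ) {M : Multiset ℕ}
    (hM : ∀ k ∈ M, μ ≤ k) :
    coeff (μ * m) (M.map (dilateGenFun A)).prod = M.count μ := by
  induction M using Multiset.induction with
  | empty => simp [coeff_one, (Nat.mul_pos hμ hm0).ne']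
  | cons k M ih =>
    have hk : μ ≤ k := hM k (Multiset.mem_cons_self k M)
    rw [Multiset.map_cons, Multiset.prod_cons,
      coeff_mul_of_coeff_eq_zero (Nat.mul_pos hμ hm0) fun i hi0 hi =>
        coeff_dilateGenFun_eq_zero hmin hi0 (hi.trans_le (Nat.mul_le_mul_right m hk)),
      ih fun k hk => hM k (Multiset.mem_cons_of_mem hk), constantCoeff_dilateGenFun h0A,
      constantCoeff_prod_map_dilateGenFun h0A, Multiset.count_cons]
    rcases hk.eq_or_lt with rfl | hlt
    · simp [coeff_dilateGenFun_mul_of_mem hmA]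
    · rw [coeff_dilateGenFun_eq_zero hmin (Nat.mul_pos hμ hm0)
        ((Nat.mul_lt_mul_right hm0).mpr hlt)]
      simp [hlt.ne]

theorem prod_map_dilateGenFun_filter_mul (p : ℕ → Prop) [DecidablePred p] (M : Multiset ℕ) :
    ((M.filter p).map (dilateGenFun A)).prod * ((M.filter (¬ p ·)).map (dilateGenFun A)).prod =
      (M.map (dilateGenFun A)).prod := by
  rw [← Multiset.prod_add, ← Multiset.map_add, Multiset.filter_add_not]

theorem eq_of_prod_map_dilateGenFun_eq (h0A : 0 ∈ A) (hA : A.Nontrivial) {M N : Multiset ℕ}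
    (hM : 0 ∉ M) (hN : 0 ∉ N)
    (h : (M.map (dilateGenFun A)).prod = (N.map (dilateGenFun A)).prod) : M = N := by
  classical
  have hpos : ∃ a, a ∈ A ∧ 0 < a := by
    obtain ⟨a, ha, ha0⟩ := hA.exists_ne 0
    exact ⟨a, ha, Nat.pos_of_ne_zero ha0⟩
  obtain ⟨hmA, hm0⟩ := Nat.find_spec hpos
  have hmin : ∀ a ∈ A, 0 < a → Nat.find hpos ≤ a := fun a ha ha0 => Nat.find_min' hpos ⟨ha, ha0⟩
  ext μ
  induction μ using Nat.strong_induction_on with | _ μ ih =>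
  rcases μ.eq_zero_or_pos with rfl | hμ
  · rw [Multiset.count_eq_zero.mpr hM, Multiset.count_eq_zero.mpr hN]
  have hlow : M.filter (· < μ) = N.filter (· < μ) := by
    ext ν
    simp only [Multiset.count_filter]
    split_ifs with hν
    exacts [ih ν hν, rfl]
  rw [← prod_map_dilateGenFun_filter_mul (· < μ) M, ← prod_map_dilateGenFun_filter_mul (· < μ) N,
    hlow] at h
  have hunit : IsUnit ((N.filter (· < μ)).map (dilateGenFun A)).prod := by
    rw [isUnit_iff_constantCoeff, constantCoeff_prod_map_dilateGenFun h0A]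
    exact isUnit_one
  have hhigh := congrArg (coeff (μ * Nat.find hpos)) (hunit.mul_left_cancel h)
  have hcount (L : Multiset ℕ) : coeff (μ * Nat.find hpos)
      ((L.filter (¬ · < μ)).map (dilateGenFun A)).prod = L.count μ := by
    rw [coeff_prod_map_dilateGenFun_of_le h0A hmA hm0 hmin hμ fun k hk => ?_,
      Multiset.count_filter_of_pos (p := (¬ · < μ)) (lt_irrefl μ)]
    exact not_lt.mp (Multiset.mem_filter.mp hk).2
  exact_mod_cast (hcount M).symm.trans (hhigh.trans (hcount N))

end dilateGenFun

theorem coeff_prod_dilateGenFun_eq_RSet (A : Set ℕ) {ι : Type} [Fintype ι] (a : ι → ℕ)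
    (ha : ∀ i, 0 < a i) (n : ℕ) : coeff n (∏ i, dilateGenFun A (a i)) = RSet A a n := by
  classical
  have hmem (i : ι) (x : ℕ) : (∃ y ∈ A, a i * y = x) ↔ a i ∣ x ∧ x / a i ∈ A := by
    constructor
    · rintro ⟨y, hy, rfl⟩
      simpa [Nat.mul_div_cancel_left _ (ha i)] using hy
    · rintro ⟨⟨y, rfl⟩, hy⟩
      exact ⟨y, by simpa [Nat.mul_div_cancel_left _ (ha i)] using hy, rfl⟩
  simp only [coeff_prod, dilateGenFun, coeff_mk, hmem, Fintype.prod_boole, Finset.sum_boole,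
    Nat.cast_inj]
  rw [RSet, ← Nat.card_eq_finsetCard]
  symm
  exact Nat.card_congr
    { toFun := fun v => ⟨Finsupp.equivFunOnFinite.symm fun i => a i * v.1 i, by
        obtain ⟨hvA, hv⟩ := v.2
        simp only [Finset.mem_filter, Finset.mem_finsuppAntidiag,
          Finsupp.coe_equivFunOnFinite_symm]
        exact ⟨⟨hv, by simp⟩, fun i => (hmem i _).mp ⟨v.1 i, hvA i, rfl⟩⟩⟩
      invFun := fun l => ⟨fun i => l.1 i / a i, by
        obtain ⟨hl, hlA⟩ := Finset.mem_filter.mp l.2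
        refine ⟨fun i => (hlA i).2, ?_⟩
        refine (Finset.sum_congr rfl fun i _ => Nat.mul_div_cancel' (hlA i).1).trans ?_
        exact (Finset.mem_finsuppAntidiag.mp hl).1⟩
      left_inv := fun v => by
        ext i
        simp [Nat.mul_div_cancel_left _ (ha i)]
      right_inv := fun l => by
        ext i
        simpa using Nat.mul_div_cancel' ((Finset.mem_filter.mp l.2).2 i).1 }

theorem stmt_5 {s t : ℕ} (A : Set ℕ) (h0A : 0 ∈ A) (hAnt : A.Nontrivial)
    (α : Fin s → ℕ) (β : Fin t → ℕ) (hα : ∀ i, 0 < α i) (hβ : ∀ i, 0 < β i)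
    (hαm : Monotone α) (hβm : Monotone β)
    (h : ∀ n : ℕ, RSet A α n = RSet A β n) :
    s = t ∧ ∀ (i : ℕ) (hi : i < s) (hj : i < t), α ⟨i, hi⟩ = β ⟨i, hj⟩ := by
  have hprod : ((List.ofFn α : Multiset ℕ).map (dilateGenFun A)).prod =
      ((List.ofFn β : Multiset ℕ).map (dilateGenFun A)).prod := by
    simp only [← Fin.univ_val_map, Multiset.map_map, Function.comp_def, Finset.prod_map_val]
    ext n
    rw [coeff_prod_dilateGenFun_eq_RSet A α hα, coeff_prod_dilateGenFun_eq_RSet A β hβ, h]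
  have hperm : (List.ofFn α).Perm (List.ofFn β) := Multiset.coe_eq_coe.mp <|
    eq_of_prod_map_dilateGenFun_eq h0A hAnt (by simpa using fun i => (hα i).ne')
      (by simpa using fun i => (hβ i).ne') hprod
  have hlist := hperm.eq_of_sortedLE hαm.sortedLE_ofFn hβm.sortedLE_ofFn
  obtain ⟨hlen, hget⟩ := List.ext_get_iff.mp hlist
  simp only [List.length_ofFn, List.get_ofFn] at hlen hget
  exact ⟨hlen, hget⟩
end

section
/- Let C, D be multisets of nonnegative integers each containing 0 exactly once with all multiplicities finite, let c_2 be the smallest positive element of C, and let n be a positive integer. Suppose α, β are finite multisets of positive integers such that the representation-count functions satisfy R_{C,α}(m) = R_{D,β}(m) for all m ≤ c_2·n, and C and D agree as multisets on [0, c_2·n]. Then α and β agree as multisets on [1, n]. -/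
/-- Representation function for a multiset of nonnegative integers given by its
multiplicity function `χ` and a coefficient vector `a` of positive integers:
`Rm χ a n` counts indexed tuples (choices of elements of the multiset, respecting
multiplicity) with `∑ a i * c_{j i} = n`. -/
def Rm (χ : ℕ → ℕ) {ι : Type} [Fintype ι] [DecidableEq ι] (a : ι → ℕ) (n : ℕ) : ℕ :=
  ∑ v : ι → Fin (n + 1), if (∑ i, a i * (v i : ℕ)) = n then ∏ i, χ (v i) else 0

open Finset

lemma Rm_congr {ι : Type} [Fintype ι] [DecidableEq ι] (χ₁ χ₂ : ℕ → ℕ)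
    (a : ι → ℕ) (m : ℕ) (h : ∀ j ≤ m, χ₁ j = χ₂ j) : Rm χ₁ a m = Rm χ₂ a m := by
  unfold Rm
  refine Finset.sum_congr rfl fun v _ => ?_
  split_ifs with hc
  · exact Finset.prod_congr rfl fun i _ => h _ (Nat.lt_succ_iff.mp (v i).isLt)
  · rfl

lemma Rm_reindex {ι κ : Type} [Fintype ι] [DecidableEq ι] [Fintype κ] [DecidableEq κ]
    (χ : ℕ → ℕ) (a : κ → ℕ) (e : ι ≃ κ) (m : ℕ) :
    Rm χ (fun i => a (e i)) m = Rm χ a m := by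
  unfold Rm
  refine Fintype.sum_equiv (Equiv.arrowCongr e (Equiv.refl (Fin (m + 1)))) _ _ fun v => ?_
  have hs : (∑ i, a (e i) * ((v i) : ℕ)) = ∑ j, a j * ((v (e.symm j)) : ℕ) :=
    Fintype.sum_equiv e _ _ fun i => by simp
  have hp : (∏ i, χ (v i)) = ∏ j, χ (v (e.symm j)) :=
    Fintype.prod_equiv e _ _ fun i => by simp
  simp only [Equiv.arrowCongr_apply, Equiv.refl_apply, Function.comp]
  rw [hs, hp]

lemma Rm_split {ι : Type} [Fintype ι] [DecidableEq ι] (χ : ℕ → ℕ) (hχ0 : χ 0 = 1)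
    (c2 : ℕ) (hc2 : 0 < c2) (hmin : ∀ m, 0 < m → m < c2 → χ m = 0)
    (a : ι → ℕ) (ha : ∀ i, 0 < a i) (k : ℕ) (hk : 1 ≤ k) :
    Rm χ a (c2 * k) =
      χ c2 * (Finset.univ.filter fun i => a i = k).card +
      Rm χ (fun i : {i // a i < k} => a i.1) (c2 * k) := by
  classical
  set N := c2 * k with hN
  have hc2N : c2 < N + 1 := by
    have : c2 * 1 ≤ c2 * k := Nat.mul_le_mul_left c2 hk
    omega
  set term : (ι → Fin (N + 1)) → ℕ :=
    fun v => if (∑ i, a i * ((v i) : ℕ)) = N then ∏ i, χ ((v i) : ℕ) else 0 with hterm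
  set P : (ι → Fin (N + 1)) → Prop := fun v => ∀ i, k ≤ a i → v i = 0 with hPdef
  set F : ι → (ι → Fin (N + 1)) :=
    fun i j => if j = i then (⟨c2, hc2N⟩ : Fin (N + 1)) else 0 with hF
  have hFvali : ∀ i, ((F i i : Fin (N + 1)) : ℕ) = c2 := fun i => by simp [hF]
  have hFvalj : ∀ i j, j ≠ i → ((F i j : Fin (N + 1)) : ℕ) = 0 := fun i j h => by
    simp [hF, h]
  have hFsum : ∀ i, (∑ j, a j * ((F i j) : ℕ)) = a i * c2 := by
    intro i
    rw [Finset.sum_eq_single i]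
    · rw [hFvali]
    · intro j _ hj; rw [hFvalj i j hj, Nat.mul_zero]
    · intro h; exact absurd (Finset.mem_univ i) h
  have hFprod : ∀ i, (∏ j, χ ((F i j) : ℕ)) = χ c2 := by
    intro i
    rw [Finset.prod_eq_single i]
    · rw [hFvali]
    · intro j _ hj; rw [hFvalj i j hj, hχ0]
    · intro h; exact absurd (Finset.mem_univ i) h
  have hterm_nonzero : ∀ v : ι → Fin (N + 1), term v ≠ 0 →
      ((∑ i, a i * ((v i) : ℕ)) = N ∧ ∀ i, (v i : ℕ) = 0 ∨ c2 ≤ (v i : ℕ)) := by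
    intro v hv
    rw [hterm] at hv
    by_cases hc : (∑ i, a i * ((v i) : ℕ)) = N
    · refine ⟨hc, fun i => ?_⟩
      simp only [if_pos hc] at hv
      by_contra hcon
      push_neg at hcon
      have h1 : 0 < (v i : ℕ) := Nat.pos_of_ne_zero hcon.1
      have h2 : (v i : ℕ) < c2 := by omega
      exact hv (Finset.prod_eq_zero (Finset.mem_univ i) (hmin _ h1 h2))
    · simp only [if_neg hc] at hv
      exact absurd rfl hv
  have hnotP : (∑ v ∈ Finset.univ.filter (fun v => ¬ P v), term v)
      = χ c2 * (Finset.univ.filter fun i => a i = k).card := by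
    have hsub : (Finset.univ.filter fun i => a i = k).image F ⊆
        Finset.univ.filter (fun v => ¬ P v) := by
      intro v hv
      rcases Finset.mem_image.mp hv with ⟨i, hi, rfl⟩
      rw [Finset.mem_filter] at hi ⊢
      refine ⟨Finset.mem_univ _, fun hPv => ?_⟩
      have h1 := hPv i (le_of_eq hi.2.symm)
      have h2 := congrArg (Fin.val) h1
      rw [hFvali] at h2
      simp only [Fin.val_zero] at h2
      omega
    have hvanish : ∀ v ∈ Finset.univ.filter (fun v => ¬ P v),
        v ∉ (Finset.univ.filter fun i => a i = k).image F → term v = 0 := by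
      intro v hv hvE
      by_contra h0
      obtain ⟨hsum, hval⟩ := hterm_nonzero v h0
      rw [Finset.mem_filter] at hv
      have hnp : ¬ ∀ i, k ≤ a i → v i = 0 := hv.2
      push_neg at hnp
      obtain ⟨i, hik, hvi⟩ := hnp
      have hvic2 : c2 ≤ (v i : ℕ) := by
        rcases hval i with h | h
        · exact absurd (Fin.ext h) hvi
        · exact h
      have hle : a i * (v i : ℕ) ≤ N := by
        have h5 : a i * ((v i) : ℕ) ≤ ∑ j, a j * ((v j) : ℕ) :=
          Finset.single_le_sum (f := fun j => a j * ((v j) : ℕ))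
            (fun _ _ => Nat.zero_le _) (Finset.mem_univ i)
        omega
      have hge : k * c2 ≤ a i * (v i : ℕ) := Nat.mul_le_mul hik hvic2
      have hNkc2 : N = k * c2 := by rw [hN, Nat.mul_comm]
      have heq : a i * (v i : ℕ) = k * c2 := le_antisymm (hNkc2 ▸ hle) hge
      have h1 : a i * c2 ≤ a i * (v i : ℕ) := Nat.mul_le_mul_left _ hvic2
      have h2 : k * c2 ≤ a i * c2 := Nat.mul_le_mul_right _ hik
      have haic2 : a i * c2 = k * c2 := le_antisymm (by omega) h2
      have haik : a i = k := Nat.eq_of_mul_eq_mul_right hc2 haic2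
      have hvic : (v i : ℕ) = c2 := by
        have h3 : a i * (v i : ℕ) = a i * c2 := by omega
        exact Nat.eq_of_mul_eq_mul_left (ha i) h3
      have hrest : ∀ j, j ≠ i → (v j : ℕ) = 0 := by
        intro j hj
        have hsum' : a i * ((v i) : ℕ) + ∑ l ∈ Finset.univ.erase i, a l * ((v l) : ℕ) = N :=
          (Finset.add_sum_erase Finset.univ (fun l => a l * ((v l) : ℕ))
            (Finset.mem_univ i)).trans hsum
        have hz : ∑ l ∈ Finset.univ.erase i, a l * ((v l) : ℕ) = 0 := by omega
        have h4 : a j * (v j : ℕ) = 0 :=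
          Finset.sum_eq_zero_iff.mp hz j (Finset.mem_erase.mpr ⟨hj, Finset.mem_univ j⟩)
        rcases Nat.mul_eq_zero.mp h4 with h | h
        · exact absurd h (Nat.pos_iff_ne_zero.mp (ha j))
        · exact h
      have hvF : v = F i := by
        funext j
        by_cases hji : j = i
        · subst hji; exact Fin.ext (by rw [hvic, hFvali])
        · exact Fin.ext (by rw [hrest j hji, hFvalj i j hji])
      exact hvE (Finset.mem_image.mpr
        ⟨i, Finset.mem_filter.mpr ⟨Finset.mem_univ i, haik⟩, hvF.symm⟩)
    have hinj : ∀ x ∈ (Finset.univ.filter fun i => a i = k), ∀ y ∈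
        (Finset.univ.filter fun i => a i = k), F x = F y → x = y := by
      intro x _ y _ hxy
      by_contra hne
      have := congrArg (fun f => ((f x : Fin (N + 1)) : ℕ)) hxy
      rw [hFvali, hFvalj y x hne] at this
      omega
    rw [← Finset.sum_subset hsub hvanish, Finset.sum_image hinj]
    have hc : ∀ i ∈ Finset.univ.filter (fun i => a i = k), term (F i) = χ c2 := by
      intro i hi
      rw [Finset.mem_filter] at hi
      rw [hterm]
      simp only
      rw [hFsum, hi.2, if_pos (by rw [hN, Nat.mul_comm]), hFprod]
    rw [Finset.sum_congr rfl hc, Finset.sum_const, smul_eq_mul, Nat.mul_comm]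
  have hPsum : (∑ v ∈ Finset.univ.filter P, term v)
      = Rm χ (fun i : {i // a i < k} => a i.1) N := by
    rw [Rm]
    refine Finset.sum_nbij' (fun v => fun x : {i // a i < k} => v x.1)
      (fun w => fun i => if h : a i < k then w ⟨i, h⟩ else 0)
      (fun v _ => Finset.mem_univ _) ?_ ?_ ?_ ?_
    · intro w _
      rw [Finset.mem_filter]
      refine ⟨Finset.mem_univ _, fun i hik => ?_⟩
      have h : ¬ a i < k := by omega
      simp only [dif_neg h]
    · intro v hv
      rw [Finset.mem_filter] at hv
      funext i
      by_cases h : a i < k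
      · simp only [dif_pos h]
      · simp only [dif_neg h]
        exact (hv.2 i (by omega)).symm
    · intro w _
      funext x
      simp only [dif_pos x.2]
    · intro v hv
      rw [Finset.mem_filter] at hv
      have hvP := hv.2
      have hsum_eq : (∑ i, a i * ((v i) : ℕ))
          = ∑ x : {i // a i < k}, a x.1 * ((v x.1) : ℕ) := by
        have h1 : (∑ i ∈ Finset.univ.filter (fun i => a i < k), a i * ((v i) : ℕ))
            = ∑ i, a i * ((v i) : ℕ) := by
          refine Finset.sum_filter_of_ne fun i _ hne => ?_
          by_contra hcon
          have h0 : v i = 0 := hvP i (by omega)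
          rw [h0] at hne
          simp at hne
        rw [← h1, Finset.sum_subtype (p := fun i => a i < k) _ (fun i => by simp) (fun i => a i * ((v i) : ℕ))]
      have hprod_eq : (∏ i, χ ((v i) : ℕ)) = ∏ x : {i // a i < k}, χ ((v x.1) : ℕ) := by
        have h1 : (∏ i ∈ Finset.univ.filter (fun i => a i < k), χ ((v i) : ℕ))
            = ∏ i, χ ((v i) : ℕ) := by
          refine Finset.prod_subset (Finset.filter_subset _ _) fun i _ hni => ?_
          have hik : ¬ a i < k := by
            intro hcon
            exact hni (Finset.mem_filter.mpr ⟨Finset.mem_univ i, hcon⟩)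
          have h0 : v i = 0 := hvP i (by omega)
          rw [h0]
          simpa using hχ0
        rw [← h1, Finset.prod_subtype (p := fun i => a i < k) _ (fun i => by simp) (fun i => χ ((v i) : ℕ))]
      rw [hterm]
      simp only
      rw [hsum_eq, hprod_eq]
  calc (∑ v : ι → Fin (N + 1), term v)
      = (∑ v ∈ Finset.univ.filter P, term v)
        + ∑ v ∈ Finset.univ.filter (fun v => ¬ P v), term v :=
        (Finset.sum_filter_add_sum_filter_not _ _ _).symm
    _ = χ c2 * (Finset.univ.filter fun i => a i = k).card
        + Rm χ (fun i : {i // a i < k} => a i.1) N := by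
        rw [hPsum, hnotP, Nat.add_comm]

lemma exists_equiv_of_fiber_card {ι κ : Type} [Fintype ι] [DecidableEq ι] [Fintype κ]
    [DecidableEq κ] (f : ι → ℕ) (g : κ → ℕ)
    (h : ∀ j, (Finset.univ.filter fun i => f i = j).card
        = (Finset.univ.filter fun i => g i = j).card) :
    ∃ e : ι ≃ κ, ∀ i, g (e i) = f i := by
  classical
  have fib : ∀ j : ℕ, (f ⁻¹' {j}) ≃ (g ⁻¹' {j}) := by
    intro j
    have e1 : (f ⁻¹' {j}) ≃ {i // f i = j} := Equiv.subtypeEquivRight fun i => Iff.rfl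
    have e2 : (g ⁻¹' {j}) ≃ {i // g i = j} := Equiv.subtypeEquivRight fun i => Iff.rfl
    refine e1.trans ((Fintype.equivOfCardEq ?_).trans e2.symm)
    rw [Fintype.card_subtype, Fintype.card_subtype, h j]
  exact ⟨Equiv.ofFiberEquiv fib, fun i => Equiv.ofFiberEquiv_map fib i⟩

theorem stmt_7 {s t : ℕ} (χC χD : ℕ → ℕ) (hC0 : χC 0 = 1) (hD0 : χD 0 = 1)
    (c2 : ℕ) (hc2pos : 0 < c2) (hc2mem : 0 < χC c2)
    (hc2min : ∀ m : ℕ, 0 < m → m < c2 → χC m = 0)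
    (n : ℕ) (hn : 0 < n)
    (a : Fin s → ℕ) (b : Fin t → ℕ) (ha : ∀ i, 0 < a i) (hb : ∀ i, 0 < b i)
    (hR : ∀ m ≤ c2 * n, Rm χC a m = Rm χD b m)
    (hCD : ∀ m ≤ c2 * n, χC m = χD m) :
    ∀ k : ℕ, 1 ≤ k → k ≤ n →
      (Finset.univ.filter fun i => a i = k).card =
        (Finset.univ.filter fun j => b j = k).card := by
  intro k
  induction k using Nat.strong_induction_on with
  | _ k IH =>
    intro hk1 hkn
    have hmulk : c2 * k ≤ c2 * n := Nat.mul_le_mul_left _ hkn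
    have hDmin : ∀ m, 0 < m → m < c2 → χD m = 0 := by
      intro m h1 h2
      rw [← hCD m (le_trans (le_of_lt h2) (Nat.le_mul_of_pos_right _ hn))]
      exact hc2min m h1 h2
    have eq1 := Rm_split χC hC0 c2 hc2pos hc2min a ha k hk1
    have eq2 := Rm_split χD hD0 c2 hc2pos hDmin b hb k hk1
    have hTD : Rm χD (fun j : {j // b j < k} => b j.1) (c2 * k)
        = Rm χC (fun j : {j // b j < k} => b j.1) (c2 * k) :=
      Rm_congr _ _ _ _ fun j hj => (hCD j (le_trans hj hmulk)).symm
    -- fiber cardinality equality for the restricted functions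
    have hfib : ∀ j, (Finset.univ.filter fun x : {i // a i < k} => a x.1 = j).card
        = (Finset.univ.filter fun x : {i // b i < k} => b x.1 = j).card := by
      intro j
      have cA : (Finset.univ.filter fun x : {i // a i < k} => a x.1 = j).card
          = (Finset.univ.filter fun i => a i < k ∧ a i = j).card := by
        refine Finset.card_bij (fun x _ => x.1) ?_ ?_ ?_
        · intro x hx
          simp only [mem_filter, mem_univ, true_and] at hx ⊢
          exact ⟨x.2, hx⟩
        · intro x _ y _ hxy; exact Subtype.ext hxy
        · intro i hi
          simp only [mem_filter, mem_univ, true_and] at hi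
          exact ⟨⟨i, hi.1⟩, by simp [hi.2], rfl⟩
      have cB : (Finset.univ.filter fun x : {i // b i < k} => b x.1 = j).card
          = (Finset.univ.filter fun i => b i < k ∧ b i = j).card := by
        refine Finset.card_bij (fun x _ => x.1) ?_ ?_ ?_
        · intro x hx
          simp only [mem_filter, mem_univ, true_and] at hx ⊢
          exact ⟨x.2, hx⟩
        · intro x _ y _ hxy; exact Subtype.ext hxy
        · intro i hi
          simp only [mem_filter, mem_univ, true_and] at hi
          exact ⟨⟨i, hi.1⟩, by simp [hi.2], rfl⟩
      rw [cA, cB]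
      rcases Nat.lt_or_ge j k with hjk | hjk
      · rcases Nat.eq_zero_or_pos j with rfl | hj0
        · have hA : (Finset.univ.filter fun i : Fin s => a i < k ∧ a i = 0) = ∅ :=
            Finset.filter_false_of_mem (fun i _ hcon => by have := ha i; omega)
          have hB : (Finset.univ.filter fun i : Fin t => b i < k ∧ b i = 0) = ∅ :=
            Finset.filter_false_of_mem (fun i _ hcon => by have := hb i; omega)
          rw [hA, hB, Finset.card_empty, Finset.card_empty]
        · have hA : (Finset.univ.filter fun i : Fin s => a i < k ∧ a i = j)
              = Finset.univ.filter fun i => a i = j :=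
            Finset.filter_congr (fun i _ => ⟨fun h' => h'.2, fun h' => ⟨by omega, h'⟩⟩)
          have hB : (Finset.univ.filter fun i : Fin t => b i < k ∧ b i = j)
              = Finset.univ.filter fun i => b i = j :=
            Finset.filter_congr (fun i _ => ⟨fun h' => h'.2, fun h' => ⟨by omega, h'⟩⟩)
          rw [hA, hB]
          exact IH j hjk hj0 (by omega)
      · have hA : (Finset.univ.filter fun i : Fin s => a i < k ∧ a i = j) = ∅ :=
          Finset.filter_false_of_mem (fun i _ hcon => by omega)
        have hB : (Finset.univ.filter fun i : Fin t => b i < k ∧ b i = j) = ∅ :=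
          Finset.filter_false_of_mem (fun i _ hcon => by omega)
        rw [hA, hB, Finset.card_empty, Finset.card_empty]
    obtain ⟨e, he⟩ := exists_equiv_of_fiber_card
      (fun x : {i // a i < k} => a x.1) (fun x : {i // b i < k} => b x.1) hfib
    have hTA : Rm χC (fun x : {i // a i < k} => a x.1) (c2 * k)
        = Rm χC (fun x : {i // b i < k} => b x.1) (c2 * k) := by
      rw [← Rm_reindex χC (fun x : {i // b i < k} => b x.1) e (c2 * k)]
      congr 1
      funext x
      exact (he x).symm
    have hc2eq : χD c2 = χC c2 :=
      (hCD c2 (le_trans (Nat.le_mul_of_pos_right _ hn) le_rfl)).symm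
    have main : Rm χC a (c2 * k) = Rm χD b (c2 * k) := hR _ hmulk
    rw [eq1, eq2, hTD, hc2eq, ← hTA] at main
    have := Nat.add_right_cancel main
    exact Nat.eq_of_mul_eq_mul_left hc2mem this
end

section
/- Let α = (α_1,...,α_s), β be finite multisets of positive integers with minimum element α_1 of α, and C, D multisets of nonnegative integers each containing 0 exactly once with finite multiplicities. Let n be a positive integer. If α and β agree as multisets on [1, α_1·n], and R_{C,α}(m) = R_{D,β}(m) for all m ≤ α_1·n, then C and D agree as multisets on [0, n]. -/
/-! With `f_χ = ∑ χ(c) X^c`, `Rm χ a N` is the coefficient of `X^N` in `∏ᵢ f_χ(X^{aᵢ})`.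
Since `χ(0) = 1`, a factor with `aᵢ > N` is `1` up to degree `N`, so this coefficient depends only
on the multiplicities of `a` on `[1, N]`; this lets us replace `b` by `a`. Then argue by strong
induction on `m`: a representation of `α₁ m` using an element `≥ m` must use `m` exactly once, with
a coefficient equal to `α₁`, and `0` everywhere else. So `Rm χ a (α₁ m)` is a quantity determined
by `χ` on `[0, m)` plus `#{i | aᵢ = α₁} · χ(m)`, and comparing `C` with `D` gives
`χ_C(m) = χ_D(m)`. -/

open Polynomial Finset

section AgreeUpTo

variable {R : Type*} [CommSemiring R] {N : ℕ}

def AgreeUpTo (N : ℕ) (p q : R[X]) : Prop := ∀ j ≤ N, p.coeff j = q.coeff j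

lemma AgreeUpTo.refl {p : R[X]} : AgreeUpTo N p p := fun _ _ => rfl

lemma AgreeUpTo.mul {p p' q q' : R[X]} (h : AgreeUpTo N p p') (h' : AgreeUpTo N q q') :
    AgreeUpTo N (p * q) (p' * q') := by
  intro j hj
  simp only [coeff_mul]
  refine sum_congr rfl fun x hx => ?_
  rw [HasAntidiagonal.mem_antidiagonal] at hx
  rw [h x.1 (by omega), h' x.2 (by omega)]

lemma AgreeUpTo.prod {ι : Type*} {s : Finset ι} {f g : ι → R[X]}
    (h : ∀ i ∈ s, AgreeUpTo N (f i) (g i)) : AgreeUpTo N (∏ i ∈ s, f i) (∏ i ∈ s, g i) := by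
  induction s using Finset.cons_induction with
  | empty => exact AgreeUpTo.refl
  | cons i s hi ih =>
    rw [prod_cons, prod_cons]
    exact (h i (mem_cons_self i s)).mul (ih fun j hj => h j (mem_cons_of_mem hj))

end AgreeUpTo

variable {ι : Type} [Fintype ι]

noncomputable def genPoly (χ : ℕ → ℕ) (N k : ℕ) : ℕ[X] :=
  ∑ c : Fin (N + 1), C (χ c) * X ^ (k * c)

lemma genPoly_agreeUpTo_one {χ : ℕ → ℕ} (hχ : χ 0 = 1) {N k : ℕ} (hk : N < k) :
    AgreeUpTo N (genPoly χ N k) 1 := by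
  intro j hj
  rw [genPoly, finsetSum_coeff, Fin.sum_univ_succ, coeff_one]
  simp only [Fin.val_zero, mul_zero, pow_zero, hχ, map_one, one_mul, coeff_one, Fin.val_succ,
    coeff_C_mul_X_pow]
  rw [sum_eq_zero fun c _ => if_neg (by nlinarith), add_zero]

lemma prod_genPoly_agreeUpTo {χ : ℕ → ℕ} (hχ : χ 0 = 1) {a : ι → ℕ} (ha : ∀ i, 0 < a i)
    (N : ℕ) :
    AgreeUpTo N (∏ i, genPoly χ N (a i)) (∏ k ∈ Icc 1 N, genPoly χ N k ^ #{i | a i = k}) := by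
  have hfib : ∏ k ∈ Icc 1 N, genPoly χ N k ^ #{i | a i = k}
      = ∏ i, if a i ∈ Icc 1 N then genPoly χ N (a i) else 1 := by
    simp only [← prod_filter, ← prod_fiberwise_eq_prod_filter', prod_const]
  rw [hfib]
  refine AgreeUpTo.prod fun i _ => ?_
  split_ifs with h
  · exact AgreeUpTo.refl
  · exact genPoly_agreeUpTo_one hχ (by have := ha i; simp only [mem_Icc] at h; omega)

variable [DecidableEq ι]

lemma Rm_eq_coeff_prod_genPoly (χ : ℕ → ℕ) (a : ι → ℕ) (N : ℕ) :
    Rm χ a N = (∏ i, genPoly χ N (a i)).coeff N := by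
  simp only [genPoly, prod_univ_sum, Fintype.piFinset_univ, finsetSum_coeff, Rm]
  refine sum_congr rfl fun v _ => ?_
  rw [prod_mul_distrib, ← map_prod, prod_pow_eq_pow_sum, coeff_C_mul_X_pow]
  exact if_congr eq_comm rfl rfl

lemma Rm_eq_of_card_fiber_eq {κ : Type} [Fintype κ] [DecidableEq κ] {χ : ℕ → ℕ}
    (hχ : χ 0 = 1) {a : ι → ℕ} {b : κ → ℕ} (ha : ∀ i, 0 < a i) (hb : ∀ j, 0 < b j) {N : ℕ}
    (hab : ∀ k ∈ Icc 1 N, #{i | a i = k} = #{j | b j = k}) :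
    Rm χ a N = Rm χ b N := by
  rw [Rm_eq_coeff_prod_genPoly, Rm_eq_coeff_prod_genPoly, prod_genPoly_agreeUpTo hχ ha N N le_rfl,
    prod_genPoly_agreeUpTo hχ hb N N le_rfl]
  exact congrArg (coeff · N) (prod_congr rfl fun k hk => by rw [hab k hk])

lemma eq_single_of_le_of_sum_mul_eq {a v : ι → ℕ} {α m : ℕ} (hα : 0 < α)
    (hm : 0 < m) (ha : ∀ j, α ≤ a j) (hsum : ∑ j, a j * v j = α * m) {i : ι} (hi : m ≤ v i) :
    a i = α ∧ v = Pi.single i m := by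
  have hsplit := add_sum_erase univ (fun j => a j * v j) (mem_univ i)
  have hlow : α * m ≤ a i * v i := Nat.mul_le_mul (ha i) hi
  have hrest : ∑ j ∈ univ.erase i, a j * v j = 0 := by omega
  have hai : a i = α := by
    by_contra h
    have : α * m < a i * v i := Nat.mul_lt_mul_of_lt_of_le (by have := ha i; omega) hi (by omega)
    omega
  refine ⟨hai, funext fun j => ?_⟩
  rcases eq_or_ne j i with rfl | hj
  · rw [Pi.single_eq_same]
    subst hai
    exact le_antisymm (Nat.le_of_mul_le_mul_left (by omega) hα) hi
  · rw [Pi.single_eq_of_ne hj]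
    have hj0 := (sum_eq_zero_iff.1 hrest) j (mem_erase.2 ⟨hj, mem_univ j⟩)
    have := ha j
    rw [mul_eq_zero] at hj0
    omega

def RmBelow (χ : ℕ → ℕ) (a : ι → ℕ) (N m : ℕ) : ℕ :=
  ∑ v : ι → Fin (N + 1), if (∀ i, (v i : ℕ) < m) ∧ ∑ i, a i * (v i : ℕ) = N then ∏ i, χ (v i) else 0

lemma RmBelow_congr {χ χ' : ℕ → ℕ} (a : ι → ℕ) (N : ℕ) {m : ℕ}
    (h : ∀ c < m, χ c = χ' c) :
    RmBelow χ a N m = RmBelow χ' a N m :=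
  sum_congr rfl fun v _ => by
    split_ifs with hv
    · exact prod_congr rfl fun i _ => h _ (hv.1 i)
    · rfl

lemma sum_repr_of_exists_le_eq_card_mul {χ : ℕ → ℕ} (hχ : χ 0 = 1) {a : ι → ℕ} {α m : ℕ}
    (hα : 0 < α) (hm : 0 < m) (ha : ∀ i, α ≤ a i) :
    ∑ v : ι → Fin (α * m + 1) with ¬(∀ i, (v i : ℕ) < m) ∧ ∑ i, a i * (v i : ℕ) = α * m,
      ∏ i, χ (v i) = #{i | a i = α} * χ m := by
  let c : Fin (α * m + 1) := ⟨m, by nlinarith⟩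
  have val_single (i j : ι) :
      ((Pi.single i c : ι → Fin (α * m + 1)) j : ℕ) = (Pi.single i m : ι → ℕ) j := by
    rcases eq_or_ne j i with rfl | h <;> simp [*, c]
  rw [card_eq_sum_ones, sum_mul, one_mul]
  symm
  refine sum_bij (fun i _ => Pi.single i c) ?_ ?_ ?_ ?_
  · intro i hi
    simp only [mem_filter, mem_univ, true_and] at hi ⊢
    simp only [val_single, not_forall, not_lt]
    exact ⟨⟨i, by simp⟩, by simp [Pi.single_apply, hi]⟩
  · intro i _ i' _ h
    have := congrFun h i
    by_contra hne
    rw [Pi.single_eq_same, Pi.single_eq_of_ne hne] at this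
    exact absurd (congrArg Fin.val this) (by simp [c]; omega)
  · intro v hv
    simp only [mem_filter, mem_univ, true_and, not_forall, not_lt] at hv ⊢
    obtain ⟨⟨i, hi⟩, hsum⟩ := hv
    obtain ⟨hai, hv⟩ := eq_single_of_le_of_sum_mul_eq hα hm ha hsum hi
    exact ⟨i, hai, funext fun j => Fin.ext (by rw [val_single, ← hv])⟩
  · intro i _
    rw [prod_eq_single i (fun j _ hj => by rw [Pi.single_eq_of_ne hj]; exact hχ) (by simp)]
    simp [c]

lemma Rm_mul_eq_RmBelow_add {χ : ℕ → ℕ} (hχ : χ 0 = 1) {a : ι → ℕ} {α m : ℕ}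
    (hα : 0 < α) (hm : 0 < m) (ha : ∀ i, α ≤ a i) :
    Rm χ a (α * m) = RmBelow χ a (α * m) m + #{i | a i = α} * χ m := by
  rw [← sum_repr_of_exists_le_eq_card_mul hχ hα hm ha, sum_filter, Rm, RmBelow,
    ← sum_add_distrib]
  refine sum_congr rfl fun v _ => ?_
  by_cases h : ∀ i, (v i : ℕ) < m <;> simp [h]

theorem stmt_8_general {s t : ℕ} (χC χD : ℕ → ℕ) (hC0 : χC 0 = 1) (hD0 : χD 0 = 1)
    (a : Fin s → ℕ) (b : Fin t → ℕ) (ha : ∀ i, 0 < a i) (hb : ∀ i, 0 < b i)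
    (α1 : ℕ) (hα1mem : ∃ i, a i = α1) (hα1min : ∀ i, α1 ≤ a i)
    (n : ℕ)
    (hab : ∀ k : ℕ, 1 ≤ k → k ≤ α1 * n →
      (Finset.univ.filter fun i => a i = k).card =
        (Finset.univ.filter fun j => b j = k).card)
    (hR : ∀ m ≤ α1 * n, Rm χC a m = Rm χD b m) :
    ∀ m ≤ n, χC m = χD m := by
  obtain ⟨i₀, hi₀⟩ := hα1mem
  have hα1 : 0 < α1 := hi₀ ▸ ha i₀
  have hcard : 0 < #{i | a i = α1} := card_pos.2 ⟨i₀, by simp [hi₀]⟩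
  have hRa : ∀ N ≤ α1 * n, Rm χC a N = Rm χD a N := fun N hN =>
    (hR N hN).trans <| Rm_eq_of_card_fiber_eq hD0 hb ha fun k hk =>
      (hab k (mem_Icc.1 hk).1 ((mem_Icc.1 hk).2.trans hN)).symm
  intro m
  induction m using Nat.strong_induction_on with
  | _ m ih =>
    intro hmn
    rcases m.eq_zero_or_pos with rfl | hm
    · rw [hC0, hD0]
    have key := hRa (α1 * m) (Nat.mul_le_mul_left α1 hmn)
    rw [Rm_mul_eq_RmBelow_add hC0 hα1 hm hα1min, Rm_mul_eq_RmBelow_add hD0 hα1 hm hα1min,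
      RmBelow_congr a _ fun c hc => ih c hc (by omega)] at key
    exact Nat.eq_of_mul_eq_mul_left hcard (Nat.add_left_cancel key)

theorem stmt_8 {s t : ℕ} (χC χD : ℕ → ℕ) (hC0 : χC 0 = 1) (hD0 : χD 0 = 1)
    (a : Fin s → ℕ) (b : Fin t → ℕ) (ha : ∀ i, 0 < a i) (hb : ∀ i, 0 < b i)
    (α1 : ℕ) (hα1mem : ∃ i, a i = α1) (hα1min : ∀ i, α1 ≤ a i)
    (n : ℕ) (hn : 0 < n)
    (hab : ∀ k : ℕ, 1 ≤ k → k ≤ α1 * n →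
      (Finset.univ.filter fun i => a i = k).card =
        (Finset.univ.filter fun j => b j = k).card)
    (hR : ∀ m ≤ α1 * n, Rm χC a m = Rm χD b m) :
    ∀ m ≤ n, χC m = χD m :=
  stmt_8_general χC χD hC0 hD0 a b ha hb α1 hα1mem hα1min n hab hR
end

section
/- Let α, α', β, β' be finite multisets of positive integers with α_1 = min(α). Fix a positive integer n. If α and β agree as multisets on [1, α_1·n] and the product multisets α·α' = {a·a' : a ∈ α, a' ∈ α'} and β·β' agree as multisets on [1, α_1·n], then α' and β' agree as multisets on [1, n]. -/
lemma pair_count {u u' : ℕ} (f : Fin u → ℕ) (f' : Fin u' → ℕ)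
    (hf : ∀ i, 0 < f i) (m : ℕ) (hm : 0 < m) :
    (Finset.univ.filter fun p : Fin u × Fin u' => f p.1 * f' p.2 = m).card =
      ∑ d ∈ m.divisors,
        (Finset.univ.filter fun i => f i = d).card *
          (Finset.univ.filter fun j => f' j = m / d).card := by
  have hset : (Finset.univ.filter fun p : Fin u × Fin u' => f p.1 * f' p.2 = m)
      = m.divisors.biUnion (fun d =>
          (Finset.univ.filter fun i => f i = d) ×ˢ
            (Finset.univ.filter fun j => f' j = m / d)) := by
    ext p
    simp only [Finset.mem_filter, Finset.mem_biUnion, Finset.mem_product, Finset.mem_univ,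
      true_and, Nat.mem_divisors]
    constructor
    · intro h
      refine ⟨f p.1, ⟨⟨f' p.2, h.symm⟩, hm.ne'⟩, rfl, ?_⟩
      rw [← h, Nat.mul_div_cancel_left _ (hf p.1)]
    · rintro ⟨d, ⟨hdvd, -⟩, h1, h2⟩
      rw [h1, h2]
      exact Nat.mul_div_cancel' hdvd
  rw [hset, Finset.card_biUnion]
  · exact Finset.sum_congr rfl fun d _ => Finset.card_product _ _
  · intro d _ e _ hde
    refine Finset.disjoint_left.mpr ?_
    rintro p hp hq
    simp only [Finset.mem_product, Finset.mem_filter] at hp hq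
    exact hde (hp.1.2 ▸ hq.1.2)

theorem stmt_9 {s s' t t' : ℕ}
    (a : Fin s → ℕ) (a' : Fin s' → ℕ) (b : Fin t → ℕ) (b' : Fin t' → ℕ)
    (ha : ∀ i, 0 < a i) (ha' : ∀ i, 0 < a' i) (hb : ∀ i, 0 < b i) (hb' : ∀ i, 0 < b' i)
    (α1 : ℕ) (hα1mem : ∃ i, a i = α1) (hα1min : ∀ i, α1 ≤ a i)
    (n : ℕ) (hn : 0 < n)
    (hab : ∀ k : ℕ, 1 ≤ k → k ≤ α1 * n →
      (Finset.univ.filter fun i => a i = k).card =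
        (Finset.univ.filter fun j => b j = k).card)
    (hprod : ∀ k : ℕ, 1 ≤ k → k ≤ α1 * n →
      (Finset.univ.filter fun p : Fin s × Fin s' => a p.1 * a' p.2 = k).card =
        (Finset.univ.filter fun p : Fin t × Fin t' => b p.1 * b' p.2 = k).card) :
    ∀ k : ℕ, 1 ≤ k → k ≤ n →
      (Finset.univ.filter fun i => a' i = k).card =
        (Finset.univ.filter fun j => b' j = k).card := by
  intro k
  induction k using Nat.strong_induction_on with
  | _ k IH =>
  intro hk1 hkn
  have hα1pos : 0 < α1 := by obtain ⟨i, hi⟩ := hα1mem; exact hi ▸ ha i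
  set m := α1 * k with hm
  have hmpos : 0 < m := Nat.mul_pos hα1pos hk1
  have hmle : m ≤ α1 * n := Nat.mul_le_mul_left _ hkn
  have E := hprod m hmpos hmle
  rw [pair_count a a' ha m hmpos, pair_count b b' hb m hmpos] at E
  have E' : ∑ d ∈ m.divisors,
      (Finset.univ.filter fun i => a i = d).card *
        (Finset.univ.filter fun j => a' j = m / d).card
    = ∑ d ∈ m.divisors,
      (Finset.univ.filter fun i => a i = d).card *
        (Finset.univ.filter fun j => b' j = m / d).card := by
    rw [E]
    refine Finset.sum_congr rfl fun d hd => ?_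
    obtain ⟨hdvd, -⟩ := Nat.mem_divisors.mp hd
    have hd1 : 1 ≤ d := Nat.pos_of_dvd_of_pos hdvd hmpos
    have hdle : d ≤ α1 * n := le_trans (Nat.le_of_dvd hmpos hdvd) hmle
    rw [hab d hd1 hdle]
  have hα1d : α1 ∈ m.divisors := Nat.mem_divisors.mpr ⟨Dvd.intro k rfl, hmpos.ne'⟩
  rw [← Finset.add_sum_erase _ _ hα1d, ← Finset.add_sum_erase _ _ hα1d] at E'
  have htail : ∑ d ∈ m.divisors.erase α1,
      (Finset.univ.filter fun i => a i = d).card *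
        (Finset.univ.filter fun j => a' j = m / d).card
    = ∑ d ∈ m.divisors.erase α1,
      (Finset.univ.filter fun i => a i = d).card *
        (Finset.univ.filter fun j => b' j = m / d).card := by
    refine Finset.sum_congr rfl fun d hd => ?_
    obtain ⟨hne, hdm⟩ := Finset.mem_erase.mp hd
    obtain ⟨hdvd, -⟩ := Nat.mem_divisors.mp hdm
    rcases Nat.eq_zero_or_pos (Finset.univ.filter fun i => a i = d).card with h0 | hpos
    · rw [h0, Nat.zero_mul, Nat.zero_mul]
    · obtain ⟨i, hi⟩ := Finset.card_pos.mp hpos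
      have hid : a i = d := (Finset.mem_filter.mp hi).2
      have hdgt : α1 < d := lt_of_le_of_ne (hid ▸ hα1min i) hne.symm
      have hq1 : 1 ≤ m / d := Nat.one_le_div_iff (hα1pos.trans hdgt) |>.mpr (Nat.le_of_dvd hmpos hdvd)
      have hqlt : m / d < k := by
        apply Nat.div_lt_of_lt_mul
        calc m = α1 * k := hm
        _ < d * k := by exact (Nat.mul_lt_mul_right hk1).mpr hdgt
      rw [IH (m / d) hqlt hq1 (le_of_lt (lt_of_lt_of_le hqlt hkn))]
  rw [htail] at E'
  have hcancel := Nat.add_right_cancel E'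
  have hmk : m / α1 = k := by rw [hm, Nat.mul_div_cancel_left _ hα1pos]
  rw [hmk] at hcancel
  have hcApos : 0 < (Finset.univ.filter fun i => a i = α1).card := by
    obtain ⟨i, hi⟩ := hα1mem
    exact Finset.card_pos.mpr ⟨i, Finset.mem_filter.mpr ⟨Finset.mem_univ i, hi⟩⟩
  exact Nat.eq_of_mul_eq_mul_left hcApos hcancel
end

section
/- Let α, β, α_1, α_2, β_1, β_2 be finite multisets of positive integers with α_1·α_2 = β_1·β_2 (as multisets of pairwise products), and let A, B be multisets of nonnegative integers containing 0 exactly once with finite multiplicities. If αA = βB (as multisets), then (α·α_2)(α_1 A) = (β·β_2)(β_1 B) as multisets. -/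
open PowerSeries

variable {R : Type*} [CommRing R]

theorem PowerSeries.X_pow_dvd_mk_sub_sum_monomial (f : ℕ → R) (n : ℕ) :
    X ^ (n + 1) ∣ mk f - ∑ k : Fin (n + 1), monomial (k : ℕ) (f k) := by
  rw [X_pow_dvd_iff]
  intro m hm
  rw [map_sub, coeff_mk, map_sum,
    Fin.sum_univ_eq_sum_range (fun k => coeff m (monomial k (f k)))]
  simp [coeff_monomial, Finset.sum_ite_eq, hm]

theorem PowerSeries.X_pow_dvd_expand {p : ℕ} (hp : p ≠ 0) {n : ℕ} {φ : R⟦X⟧}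
    (h : X ^ n ∣ φ) : X ^ n ∣ expand p hp φ := by
  obtain ⟨ψ, rfl⟩ := h
  rw [map_mul, map_pow, expand_X, ← pow_mul]
  exact (pow_dvd_pow (X : R⟦X⟧) (Nat.le_mul_of_pos_left n (Nat.pos_of_ne_zero hp))).mul_right _

/-- Up to degree `n`, `χ` may be replaced by its restriction to `{0, …, n}`; the product of the
resulting polynomials expands into exactly the sum defining `Rm χ a n`. -/
theorem mk_Rm_cast_eq_prod_expand {ι : Type} [Fintype ι] [DecidableEq ι] (χ : ℕ → ℕ)
    (a : ι → ℕ) (ha : ∀ i, a i ≠ 0) :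
    (mk fun n => (Rm χ a n : R)) = ∏ i, expand (a i) (ha i) (mk fun k => (χ k : R)) := by
  ext n
  set T : R⟦X⟧ := ∑ k : Fin (n + 1), monomial (k : ℕ) (χ k : R)
  have hT : coeff n (∏ i, expand (a i) (ha i) (mk fun k => (χ k : R))) =
      coeff n (∏ i, expand (a i) (ha i) T) := by
    have hmod : ∏ i, expand (a i) (ha i) (mk fun k => (χ k : R)) ≡ ∏ i, expand (a i) (ha i) T
        [SMOD Ideal.span {(X : R⟦X⟧) ^ (n + 1)}] := by
      refine SModEq.prod fun i _ => SModEq.sub_mem.mpr ?_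
      rw [Ideal.mem_span_singleton, ← map_sub]
      exact X_pow_dvd_expand _ (X_pow_dvd_mk_sub_sum_monomial _ n)
    rw [SModEq.sub_mem, Ideal.mem_span_singleton, X_pow_dvd_iff] at hmod
    simpa only [map_sub, sub_eq_zero] using hmod n n.lt_succ_self
  rw [coeff_mk, hT]
  simp only [T, map_sum, expand_monomial, Fintype.prod_sum, prod_monomial, coeff_monomial]
  unfold Rm
  push_cast
  simp [eq_comm]

theorem mk_Rm_Rm_cast_eq_prod_expand {σ σ₁ σ₂ : Type} [Fintype σ] [Fintype σ₁] [Fintype σ₂]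
    [DecidableEq σ] [DecidableEq σ₁] [DecidableEq σ₂] (χ : ℕ → ℕ) (c : σ → ℕ) (c₁ : σ₁ → ℕ)
    (c₂ : σ₂ → ℕ) (hc : ∀ i, c i ≠ 0) (hc₁ : ∀ i, c₁ i ≠ 0) (hc₂ : ∀ i, c₂ i ≠ 0) :
    (mk fun n => (Rm (fun m => Rm χ c₁ m) (fun p : σ × σ₂ => c p.1 * c₂ p.2) n : R)) =
      ∏ q : σ₁ × σ₂, expand (c₁ q.1 * c₂ q.2) (mul_ne_zero (hc₁ q.1) (hc₂ q.2))
        (∏ j, expand (c j) (hc j) (mk fun k => (χ k : R))) := by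
  rw [mk_Rm_cast_eq_prod_expand _ (fun p : σ × σ₂ => c p.1 * c₂ p.2)
      fun p => mul_ne_zero (hc p.1) (hc₂ p.2),
    mk_Rm_cast_eq_prod_expand χ c₁ hc₁]
  simp only [map_prod, ← expand_mul]
  rw [← Fintype.prod_prod_type', ← Fintype.prod_prod_type']
  let e : (σ × σ₂) × σ₁ ≃ (σ₁ × σ₂) × σ :=
    { toFun := fun x => ((x.2, x.1.2), x.1.1)
      invFun := fun y => ((y.2, y.1.2), y.1.1)
      left_inv := fun _ => rfl
      right_inv := fun _ => rfl }
  exact Fintype.prod_equiv e _ _ fun _ => by congr 2; simp only [e, Equiv.coe_fn_mk]; ring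

theorem Multiset.map_univ_eq_of_card_filter_eq {ι κ β : Type*} [Fintype ι] [Fintype κ]
    [DecidableEq β] {u : ι → β} {w : κ → β}
    (h : ∀ b, (Finset.univ.filter fun i => u i = b).card =
      (Finset.univ.filter fun j => w j = b).card) :
    Finset.univ.val.map u = Finset.univ.val.map w := by
  ext b
  simpa [Multiset.count_map, eq_comm, Finset.card_def] using h b

theorem PowerSeries.prod_expand_eq_of_map_eq {ι κ : Type*} [Fintype ι] [Fintype κ]
    {u : ι → ℕ} {w : κ → ℕ} (hu : ∀ i, u i ≠ 0) (hw : ∀ j, w j ≠ 0)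
    (h : Finset.univ.val.map u = Finset.univ.val.map w) (φ : R⟦X⟧) :
    ∏ i, expand (u i) (hu i) φ = ∏ j, expand (w j) (hw j) φ := by
  have := congrArg (fun s => (s.map fun k => subst ((X : R⟦X⟧) ^ k) φ).prod) h
  simpa only [expand_apply, Multiset.map_map, Function.comp_def, Finset.prod_map_val] using this

theorem stmt_11_general {s t s1 s2 t1 t2 : ℕ}
    (a : Fin s → ℕ) (b : Fin t → ℕ)
    (a1 : Fin s1 → ℕ) (a2 : Fin s2 → ℕ) (b1 : Fin t1 → ℕ) (b2 : Fin t2 → ℕ)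
    (ha : ∀ i, 0 < a i) (hb : ∀ i, 0 < b i)
    (ha1 : ∀ i, 0 < a1 i) (ha2 : ∀ i, 0 < a2 i)
    (hb1 : ∀ i, 0 < b1 i) (hb2 : ∀ i, 0 < b2 i)
    (hprod : ∀ k : ℕ,
      (Finset.univ.filter fun p : Fin s1 × Fin s2 => a1 p.1 * a2 p.2 = k).card =
        (Finset.univ.filter fun p : Fin t1 × Fin t2 => b1 p.1 * b2 p.2 = k).card)
    (χA χB : ℕ → ℕ)
    (h : ∀ n : ℕ, Rm χA a n = Rm χB b n) :
    ∀ n : ℕ,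
      Rm (fun m => Rm χA a1 m) (fun p : Fin s × Fin s2 => a p.1 * a2 p.2) n =
        Rm (fun m => Rm χB b1 m) (fun p : Fin t × Fin t2 => b p.1 * b2 p.2) n := by
  -- `PowerSeries.expand` needs a ring, so the counts are compared in `ℤ⟦X⟧`.
  have hG : ∏ j, expand (a j) (ha j).ne' (mk fun k => (χA k : ℤ)) =
      ∏ j, expand (b j) (hb j).ne' (mk fun k => (χB k : ℤ)) := by
    rw [← mk_Rm_cast_eq_prod_expand, ← mk_Rm_cast_eq_prod_expand]
    simp only [h]
  suffices (mk fun n => (Rm (fun m => Rm χA a1 m) (fun p : Fin s × Fin s2 => a p.1 * a2 p.2) n : ℤ))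
      = mk fun n => (Rm (fun m => Rm χB b1 m) (fun p : Fin t × Fin t2 => b p.1 * b2 p.2) n : ℤ) by
    intro n
    simpa only [coeff_mk, Nat.cast_inj] using congrArg (coeff n) this
  rw [mk_Rm_Rm_cast_eq_prod_expand χA a a1 a2 (fun i => (ha i).ne') (fun i => (ha1 i).ne')
      (fun i => (ha2 i).ne'),
    mk_Rm_Rm_cast_eq_prod_expand χB b b1 b2 (fun i => (hb i).ne') (fun i => (hb1 i).ne')
      (fun i => (hb2 i).ne'), hG]
  exact prod_expand_eq_of_map_eq _ _ (Multiset.map_univ_eq_of_card_filter_eq hprod) _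

theorem stmt_11 {s t s1 s2 t1 t2 : ℕ}
    (a : Fin s → ℕ) (b : Fin t → ℕ)
    (a1 : Fin s1 → ℕ) (a2 : Fin s2 → ℕ) (b1 : Fin t1 → ℕ) (b2 : Fin t2 → ℕ)
    (ha : ∀ i, 0 < a i) (hb : ∀ i, 0 < b i)
    (ha1 : ∀ i, 0 < a1 i) (ha2 : ∀ i, 0 < a2 i)
    (hb1 : ∀ i, 0 < b1 i) (hb2 : ∀ i, 0 < b2 i)
    (hprod : ∀ k : ℕ,
      (Finset.univ.filter fun p : Fin s1 × Fin s2 => a1 p.1 * a2 p.2 = k).card =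
        (Finset.univ.filter fun p : Fin t1 × Fin t2 => b1 p.1 * b2 p.2 = k).card)
    (χA χB : ℕ → ℕ) (hA0 : χA 0 = 1) (hB0 : χB 0 = 1)
    (h : ∀ n : ℕ, Rm χA a n = Rm χB b n) :
    ∀ n : ℕ,
      Rm (fun m => Rm χA a1 m) (fun p : Fin s × Fin s2 => a p.1 * a2 p.2) n =
        Rm (fun m => Rm χB b1 m) (fun p : Fin t × Fin t2 => b p.1 * b2 p.2) n :=
  stmt_11_general a b a1 a2 b1 b2 ha hb ha1 ha2 hb1 hb2 hprod χA χB h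
end

section
/- Let α = (α_1,...,α_s) and β = (β_1,...,β_t) be vectors of positive integers, and A, B infinite sets (or multisets with finite multiplicities) of nonnegative integers with min(A) = a_1, min(B) = b_1. If R_{A,α}(n) = R_{B,β}(n) for all n, then there exists w ∈ ℕ with a_1 = w·(Σβ_i)/d and b_1 = w·(Σα_i)/d, where d = gcd(Σα_i, Σβ_i). -/
theorem Rm_pos {ι : Type} [Fintype ι] [DecidableEq ι] (χ : ℕ → ℕ) (a : ι → ℕ)
    (ha : 1 ≤ ∑ i, a i) (c : ℕ) (hχ : 0 < χ c) : 0 < Rm χ a ((∑ i, a i) * c) := by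
  have hcn : c < (∑ i, a i) * c + 1 :=
    Nat.lt_succ_of_le (Nat.le_mul_of_pos_left c ha)
  apply Finset.sum_pos' (fun _ _ => Nat.zero_le _)
  refine ⟨fun _ => ⟨c, hcn⟩, Finset.mem_univ _, ?_⟩
  rw [if_pos]
  · exact Finset.prod_pos (fun i _ => hχ)
  · simp [Finset.sum_mul]

theorem Rm_eq_zero {ι : Type} [Fintype ι] [DecidableEq ι] (χ : ℕ → ℕ) (a : ι → ℕ)
    (c : ℕ) (hχ : ∀ m < c, χ m = 0) (n : ℕ) (hn : n < (∑ i, a i) * c) :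
    Rm χ a n = 0 := by
  apply Finset.sum_eq_zero
  intro v _
  split_ifs with hv
  · by_contra hprod
    have hpos : ∀ i ∈ Finset.univ, χ (v i) ≠ 0 :=
      Finset.prod_ne_zero_iff.mp hprod
    have hge : ∀ i : ι, c ≤ (v i : ℕ) := by
      intro i
      by_contra hlt
      exact hpos i (Finset.mem_univ i) (hχ _ (Nat.lt_of_not_le hlt))
    have hle : (∑ i, a i) * c ≤ n := by
      rw [← hv, Finset.sum_mul]
      exact Finset.sum_le_sum fun i _ => Nat.mul_le_mul_left _ (hge i)
    omega
  · rfl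

theorem stmt_18 {s t : ℕ} (hs : 0 < s) (ht : 0 < t) (χA χB : ℕ → ℕ)
    (a1 b1 : ℕ) (hA1 : 0 < χA a1) (hA1' : ∀ m < a1, χA m = 0)
    (hB1 : 0 < χB b1) (hB1' : ∀ m < b1, χB m = 0)
    (α : Fin s → ℕ) (β : Fin t → ℕ) (hα : ∀ i, 0 < α i) (hβ : ∀ i, 0 < β i)
    (h : ∀ n : ℕ, Rm χA α n = Rm χB β n) :
    ∃ w : ℕ,
      a1 = w * ((∑ i, β i) / Nat.gcd (∑ i, α i) (∑ i, β i)) ∧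
      b1 = w * ((∑ i, α i) / Nat.gcd (∑ i, α i) (∑ i, β i)) := by
  set Sα := ∑ i, α i with hSαdef
  set Sβ := ∑ i, β i with hSβdef
  have hSα : 1 ≤ Sα := by
    calc (1 : ℕ) ≤ s := hs
    _ = ∑ _i : Fin s, 1 := by simp
    _ ≤ Sα := Finset.sum_le_sum fun i _ => hα i
  have hSβ : 1 ≤ Sβ := by
    calc (1 : ℕ) ≤ t := ht
    _ = ∑ _i : Fin t, 1 := by simp
    _ ≤ Sβ := Finset.sum_le_sum fun i _ => hβ i
  have key : Sα * a1 = Sβ * b1 := by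
    rcases Nat.lt_trichotomy (Sα * a1) (Sβ * b1) with hlt | heq | hgt
    · have h1 : 0 < Rm χA α (Sα * a1) := Rm_pos χA α hSα a1 hA1
      have h2 : Rm χB β (Sα * a1) = 0 := Rm_eq_zero χB β b1 hB1' _ hlt
      rw [h] at h1; omega
    · exact heq
    · have h1 : 0 < Rm χB β (Sβ * b1) := Rm_pos χB β hSβ b1 hB1
      have h2 : Rm χA α (Sβ * b1) = 0 := Rm_eq_zero χA α a1 hA1' _ hgt
      rw [← h] at h1; omega
  set d := Nat.gcd Sα Sβ with hddef
  have hd : 0 < d := Nat.gcd_pos_of_pos_left _ hSα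
  have hxd : Sα / d * d = Sα := Nat.div_mul_cancel (Nat.gcd_dvd_left _ _)
  have hyd : Sβ / d * d = Sβ := Nat.div_mul_cancel (Nat.gcd_dvd_right _ _)
  have hco : Nat.Coprime (Sα / d) (Sβ / d) := Nat.coprime_div_gcd_div_gcd hd
  have key2 : Sα / d * a1 = Sβ / d * b1 := by
    have h' : Sα / d * a1 * d = Sβ / d * b1 * d := by
      rw [mul_right_comm, hxd, mul_right_comm, hyd]; exact key
    exact Nat.eq_of_mul_eq_mul_right hd h'
  have hdvd : Sβ / d ∣ a1 := by
    have h1 : Sβ / d ∣ Sα / d * a1 := ⟨b1, key2⟩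
    exact (Nat.Coprime.dvd_of_dvd_mul_left hco.symm h1)
  obtain ⟨w, hw⟩ := hdvd
  have hβdpos : 0 < Sβ / d := Nat.div_pos (Nat.le_of_dvd (by omega) (Nat.gcd_dvd_right _ _)) hd
  refine ⟨w, by rw [hw, mul_comm], ?_⟩
  have : Sβ / d * (Sα / d * w) = Sβ / d * b1 := by
    rw [← key2, hw]; ring
  have hb := Nat.eq_of_mul_eq_mul_left hβdpos this
  rw [← hb, mul_comm]
end
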